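/- For x = (x₁₁,x₁₂,x₂₁,x₂₂) ∈ k⁴ \ {0}, there exist elements a in the k-linear span of {p₁,p₂} and b in the k-linear span of {q₁,q₂} such that x₁₁[p₁,q₁] + x₁₂[p₁,q₂] + x₂₁[p₂,q₁] + x₂₂[p₂,q₂] = [a,b] in A*B if and only if x₁₁x₂₂ = x₁₂x₂₁. -/

import Mathlib

open scoped TensorProduct

/-- A two-element family of types, used to form binary free products. -/
def fam (A B : Type) : Bool → Type
  | true => A
  | false => B

instance famSemiring (A B : Type) [Semiring A] [Semiring B] : ∀ b, Semiring (fam A B b)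
  | true => ‹Semiring A›
  | false => ‹Semiring B›

instance famAlgebra (k A B : Type) [CommSemiring k] [Semiring A] [Semiring B]
    [Algebra k A] [Algebra k B] : ∀ b, Algebra k (fam A B b)
  | true => ‹Algebra k A›
  | false => ‹Algebra k B›

/-- The free product (coproduct in the category of unital associative `k`-algebras)
`A * B` of two `k`-algebras. -/
abbrev FP (k A B : Type) [CommSemiring k] [Semiring A] [Semiring B]
    [Algebra k A] [Algebra k B] : Type :=
  LinearAlgebra.FreeProduct k (fam A B)

/-- The canonical map `A →ₐ[k] A * B`. -/
noncomputable def inl (k A B : Type) [CommSemiring k] [Semiring A] [Semiring B]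
    [Algebra k A] [Algebra k B] : A →ₐ[k] FP k A B :=
  LinearAlgebra.FreeProduct.ι k (fam A B) true

/-- The canonical map `B →ₐ[k] A * B`. -/
noncomputable def inr (k A B : Type) [CommSemiring k] [Semiring A] [Semiring B]
    [Algebra k A] [Algebra k B] : B →ₐ[k] FP k A B :=
  LinearAlgebra.FreeProduct.ι k (fam A B) false

/-- The image in `A*B` of the `i`-th standard primitive idempotent of `A = k^⊕3`. -/
noncomputable def pgen (k : Type) [Field k] (i : Fin 3) : FP k (Fin 3 → k) (Fin 3 → k) :=
  inl k (Fin 3 → k) (Fin 3 → k) (Pi.single i 1)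

/-- The image in `A*B` of the `i`-th standard primitive idempotent of `B = k^⊕3`. -/
noncomputable def qgen (k : Type) [Field k] (i : Fin 3) : FP k (Fin 3 → k) (Fin 3 → k) :=
  inr k (Fin 3 → k) (Fin 3 → k) (Pi.single i 1)

/-!
Writing `a = ∑ αᵢ pᵢ` and `b = ∑ βⱼ qⱼ`, bilinearity gives `[a, b] = ∑ αᵢ βⱼ [pᵢ, qⱼ]`. The four
commutators `[pᵢ, qⱼ]` (`i, j ∈ {1, 2}`) are linearly independent: for each `(i, j)` there is a
representation of `A * B` on `k²` sending `pᵢ, p₃` to complementary idempotents `E, 1 - E`,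
`qⱼ, q₃` to `Q, 1 - Q` with `[E, Q] ≠ 0`, and all other generators to `0`; it kills every
commutator except `[pᵢ, qⱼ]`. Hence `x` is a sum of this form iff `x` is an outer product `α βᵀ`,
i.e. iff `det x = 0`.
-/

section

variable {R A ι : Type*} [CommSemiring R] [Ring A] [Algebra R A] {e : A}

noncomputable def IsIdempotentElem.piAlgHom (he : IsIdempotentElem e) (a b : ι) :
    (ι → R) →ₐ[R] A where
  toFun f := f a • e + f b • (1 - e)
  map_one' := by simp
  map_mul' f g := by
    simp only [Pi.mul_apply, add_mul, mul_add, smul_mul_smul_comm, he.eq, he.one_sub.eq,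
      he.mul_one_sub_self, he.one_sub_mul_self, smul_zero, add_zero, zero_add]
  map_zero' := by simp
  map_add' f g := by simp only [Pi.add_apply, add_smul]; abel
  commutes' r := by simp [Algebra.algebraMap_eq_smul_one, ← smul_add]

theorem IsIdempotentElem.piAlgHom_single [DecidableEq ι] (he : IsIdempotentElem e) {a b l : ι}
    (hl : l ≠ b) : he.piAlgHom a b (Pi.single l 1 : ι → R) = (Pi.single l 1 : ι → R) a • e := by
  simp [IsIdempotentElem.piAlgHom, Pi.single_eq_of_ne' hl]

end

namespace FP

variable {k A B C : Type} [CommSemiring k] [Semiring A] [Semiring B] [Semiring C]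
  [Algebra k A] [Algebra k B] [Algebra k C]

noncomputable def lift (f : A →ₐ[k] C) (g : B →ₐ[k] C) : FP k A B →ₐ[k] C :=
  LinearAlgebra.FreeProduct.lift k (fam A B) fun {b} => match b with
    | true => f
    | false => g

@[simp] theorem lift_inl (f : A →ₐ[k] C) (g : B →ₐ[k] C) (a : A) :
    lift f g (inl k A B a) = f a :=
  AlgHom.congr_fun (LinearAlgebra.FreeProduct.lift_comp_ι k (fam A B) (i := true)
    (maps := fun {b} => match b with | true => f | false => g)) a

@[simp] theorem lift_inr (f : A →ₐ[k] C) (g : B →ₐ[k] C) (b : B) :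
    lift f g (inr k A B b) = g b :=
  AlgHom.congr_fun (LinearAlgebra.FreeProduct.lift_comp_ι k (fam A B) (i := false)
    (maps := fun {b} => match b with | true => f | false => g)) b

end FP

theorem sum_smul_mul_sum_smul_sub {R A ι κ : Type*} [CommSemiring R] [NonUnitalRing A]
    [Module R A] [IsScalarTower R A A] [SMulCommClass R A A] [Fintype ι] [Fintype κ]
    (α : ι → R) (β : κ → R) (e : ι → A) (f : κ → A) :
    (∑ i, α i • e i) * (∑ j, β j • f j) - (∑ j, β j • f j) * (∑ i, α i • e i) =
      ∑ ij : ι × κ, (α ij.1 * β ij.2) • (e ij.1 * f ij.2 - f ij.2 * e ij.1) := by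
  rw [Finset.sum_mul_sum, Finset.sum_mul_sum, Finset.sum_comm (s := Finset.univ (α := κ)),
    ← Finset.sum_sub_distrib, Fintype.sum_prod_type]
  refine Finset.sum_congr rfl fun i _ => ?_
  rw [← Finset.sum_sub_distrib]
  refine Finset.sum_congr rfl fun j _ => ?_
  rw [smul_mul_smul_comm, smul_mul_smul_comm, mul_comm (β j), smul_sub]

theorem exists_commutator_eq_sum_smul_commutator_iff {R A S T : Type*} [CommRing R]
    [NonUnitalRing A] [Module R A] [IsScalarTower R A A] [SMulCommClass R A A] [Fintype S]
    [Fintype T] {e : S → A} {f : T → A}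
    (hef : LinearIndependent R fun st : S × T => e st.1 * f st.2 - f st.2 * e st.1)
    (x : S × T → R) :
    (∃ a ∈ Submodule.span R (Set.range e), ∃ b ∈ Submodule.span R (Set.range f),
        ∑ st : S × T, x st • (e st.1 * f st.2 - f st.2 * e st.1) = a * b - b * a) ↔
      ∃ α : S → R, ∃ β : T → R, ∀ st, x st = α st.1 * β st.2 := by
  simp only [Submodule.mem_span_range_iff_exists_fun]
  constructor
  · rintro ⟨_, ⟨α, rfl⟩, _, ⟨β, rfl⟩, h⟩
    rw [sum_smul_mul_sum_smul_sub] at h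
    exact ⟨α, β, Fintype.linearIndependent_iffₛ.1 hef _ _ h⟩
  · rintro ⟨α, β, h⟩
    refine ⟨_, ⟨α, rfl⟩, _, ⟨β, rfl⟩, ?_⟩
    simp only [sum_smul_mul_sum_smul_sub, h]

open Matrix in
theorem linearIndependent_commutator_inl_inr {k ι κ S T : Type} [Field k] [DecidableEq ι]
    [DecidableEq κ] {σ : S → ι} {τ : T → κ} (hσ : Function.Injective σ)
    (hτ : Function.Injective τ) {i₀ : ι} {j₀ : κ} (hi₀ : ∀ s, σ s ≠ i₀) (hj₀ : ∀ t, τ t ≠ j₀) :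
    LinearIndependent k fun st : S × T =>
      inl k (ι → k) (κ → k) (Pi.single (σ st.1) 1) * inr k (ι → k) (κ → k) (Pi.single (τ st.2) 1)
        - inr k (ι → k) (κ → k) (Pi.single (τ st.2) 1) *
          inl k (ι → k) (κ → k) (Pi.single (σ st.1) 1) := by
  classical
  set E : Matrix (Fin 2) (Fin 2) k := !![1, 0; 0, 0]
  set Q : Matrix (Fin 2) (Fin 2) k := !![1, 0; 1, 0]
  have hE : IsIdempotentElem E := by
    ext i j; fin_cases i <;> fin_cases j <;> simp [E, mul_apply]
  have hQ : IsIdempotentElem Q := by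
    ext i j; fin_cases i <;> fin_cases j <;> simp [Q, mul_apply]
  have hEQ : E * Q - Q * E ≠ 0 := fun h => by simpa [E, Q, mul_fin_two] using congr_fun₂ h 1 0
  rw [linearIndependent_iff']
  rintro u g hg ⟨s, t⟩ hst
  let ρ := FP.lift (hE.piAlgHom (R := k) (σ s) i₀) (hQ.piAlgHom (R := k) (τ t) j₀)
  have hρ : ∀ st : S × T, ρ (inl k (ι → k) (κ → k) (Pi.single (σ st.1) 1) *
      inr k (ι → k) (κ → k) (Pi.single (τ st.2) 1) - inr k (ι → k) (κ → k) (Pi.single (τ st.2) 1) *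
        inl k (ι → k) (κ → k) (Pi.single (σ st.1) 1)) =
        if st = (s, t) then E * Q - Q * E else 0 := by
    rintro ⟨s', t'⟩
    simp only [map_sub, map_mul, ρ, FP.lift_inl, FP.lift_inr, hE.piAlgHom_single (hi₀ _),
      hQ.piAlgHom_single (hj₀ _), Pi.single_apply, hσ.eq_iff, hτ.eq_iff, Prod.mk.injEq,
      eq_comm (a := s'), eq_comm (a := t')]
    by_cases hs : s = s' <;> by_cases ht : t = t' <;> simp [hs, ht]
  have hgρ := congrArg ρ hg
  rw [map_sum, map_zero] at hgρ
  simp only [map_smul, hρ, smul_ite, smul_zero] at hgρ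
  rw [Finset.sum_ite_eq', if_pos hst] at hgρ
  exact (smul_eq_zero.1 hgρ).resolve_right hEQ

theorem exists_eq_mul_of_forall_mul_eq_mul {k ι κ : Type*} [Field k] {x : ι × κ → k}
    (hx : ∀ i i' j j', x (i, j) * x (i', j') = x (i, j') * x (i', j)) :
    ∃ α : ι → k, ∃ β : κ → k, ∀ ij, x ij = α ij.1 * β ij.2 := by
  by_cases hzero : ∀ ij, x ij = 0
  · exact ⟨0, 0, by simpa using hzero⟩
  push Not at hzero
  obtain ⟨⟨i₀, j₀⟩, h₀⟩ := hzero
  refine ⟨fun i => x (i, j₀), fun j => x (i₀, j) / x (i₀, j₀), fun ⟨i, j⟩ => ?_⟩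
  rw [mul_div_assoc', eq_div_iff h₀, ← hx i i₀ j j₀]

theorem exists_eq_mul_iff_fin_two {k : Type*} [Field k] (x : Fin 2 × Fin 2 → k) :
    (∃ α β : Fin 2 → k, ∀ ij, x ij = α ij.1 * β ij.2) ↔
      x (0, 0) * x (1, 1) = x (0, 1) * x (1, 0) := by
  constructor
  · rintro ⟨α, β, h⟩
    simp only [h]
    ring
  · intro h
    refine exists_eq_mul_of_forall_mul_eq_mul fun i i' j j' => ?_
    fin_cases i <;> fin_cases i' <;> fin_cases j <;> fin_cases j' <;>
      simp only [Fin.zero_eta, Fin.mk_one] <;>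
      first | ring1 | linear_combination h | linear_combination -h

theorem statement8_general (k : Type) [Field k] (x : Fin 2 × Fin 2 → k) :
    (∃ a ∈ Submodule.span k {pgen k 0, pgen k 1},
      ∃ b ∈ Submodule.span k {qgen k 0, qgen k 1},
        (∑ ij : Fin 2 × Fin 2, x ij •
          (pgen k ij.1.castSucc * qgen k ij.2.castSucc
            - qgen k ij.2.castSucc * pgen k ij.1.castSucc)) = a * b - b * a)
    ↔ x (0, 0) * x (1, 1) = x (0, 1) * x (1, 0) := by
  have hrange (f : Fin 3 → FP k (Fin 3 → k) (Fin 3 → k)) :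
      {f 0, f 1} = Set.range (f ∘ Fin.castSucc) := by
    ext; simp [Fin.exists_fin_two, eq_comm]
  rw [hrange (pgen k), hrange (qgen k), ← exists_eq_mul_iff_fin_two]
  -- Without the explicit `e`, `f` and `ι`, `κ` (`castSucc` lands in `Fin (2 + 1)`), elaboration
  -- unfolds the free product and times out.
  exact exists_commutator_eq_sum_smul_commutator_iff (e := pgen k ∘ Fin.castSucc)
    (f := qgen k ∘ Fin.castSucc)
    (linearIndependent_commutator_inl_inr (ι := Fin 3) (κ := Fin 3) (Fin.castSucc_injective 2)
      (Fin.castSucc_injective 2) Fin.castSucc_ne_last Fin.castSucc_ne_last) x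

theorem statement8 (k : Type) [Field k] [IsAlgClosed k] [CharZero k]
    (x : Fin 2 × Fin 2 → k) (hx : x ≠ 0) :
    (∃ a ∈ Submodule.span k {pgen k 0, pgen k 1},
      ∃ b ∈ Submodule.span k {qgen k 0, qgen k 1},
        (∑ ij : Fin 2 × Fin 2, x ij •
          (pgen k ij.1.castSucc * qgen k ij.2.castSucc
            - qgen k ij.2.castSucc * pgen k ij.1.castSucc)) = a * b - b * a)
    ↔ x (0, 0) * x (1, 1) = x (0, 1) * x (1, 0) :=
  statement8_general k x
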